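/- arXiv:1203.0690 — 2 statements merged into one kernel-verified Lean document; each statement's English description precedes it below -/
import Mathlib

section
/- For each fixed k and l, the sequence n ↦ C(k,n)_{l+1} is non-decreasing for 0 ≤ n ≤ floor(kl/2): if 0 ≤ n ≤ n' ≤ floor(kl/2), then C(k,n)_{l+1} ≤ C(k,n')_{l+1}. -/
/-- The polynomial coefficient `C(k,n)_{l+1}`: the coefficient of `x^n` in
`(1 + x + x^2 + ⋯ + x^l)^k`. -/
noncomputable def polyCoeff (l k n : ℕ) : ℕ :=
  ((∑ i ∈ Finset.range (l + 1), (Polynomial.X : Polynomial ℕ) ^ i) ^ k).coeff n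

namespace PolyCoeffAux

open Polynomial Finset

noncomputable def P (l : ℕ) : Polynomial ℕ :=
  ∑ i ∈ Finset.range (l + 1), (Polynomial.X : Polynomial ℕ) ^ i

lemma coeff_P (l m : ℕ) : (P l).coeff m = if m < l + 1 then 1 else 0 := by
  simp [P, finset_sum_coeff, coeff_X_pow, Finset.sum_ite_eq]

lemma natDegree_P_le (l : ℕ) : (P l).natDegree ≤ l := by
  apply natDegree_sum_le_of_forall_le
  intro i hi
  simpa using Nat.lt_succ_iff.mp (Finset.mem_range.mp hi)

lemma reflect_P (l : ℕ) : (P l).reflect l = P l := by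
  ext j
  rw [coeff_reflect, coeff_P, coeff_P]
  rcases le_or_gt j l with h | h
  · rw [revAt_le h]; simp [Nat.lt_succ_iff, h, Nat.sub_le]
  · rw [revAt_eq_self_of_lt h]

lemma reflect_P_pow (l k : ℕ) : ((P l) ^ k).reflect (k * l) = (P l) ^ k := by
  induction k with
  | zero => simp [reflect_one]
  | succ k ih =>
      have h1 : ((P l) ^ k).natDegree ≤ k * l :=
        natDegree_pow_le_of_le k (natDegree_P_le l)
      have : (k + 1) * l = k * l + l := by ring
      rw [pow_succ, this, reflect_mul _ _ h1 (natDegree_P_le l), ih, reflect_P]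

lemma symm (l k i : ℕ) (hi : i ≤ k * l) :
    polyCoeff l k i = polyCoeff l k (k * l - i) := by
  have := reflect_P_pow l k
  have h2 : ((P l) ^ k).coeff i = (((P l) ^ k).reflect (k * l)).coeff i := by rw [this]
  rw [coeff_reflect, revAt_le hi] at h2
  exact h2

lemma recurrence (l k m : ℕ) :
    polyCoeff l (k + 1) m =
      ∑ j ∈ Finset.range (l + 1), (if j ≤ m then polyCoeff l k (m - j) else 0) := by
  show ((P l) ^ (k + 1)).coeff m = _
  rw [pow_succ]
  conv_lhs => rw [show (P l) = ∑ j ∈ Finset.range (l + 1), (X : Polynomial ℕ) ^ j from rfl]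
  rw [Finset.mul_sum, finset_sum_coeff]
  refine Finset.sum_congr rfl fun j _ => ?_
  rw [coeff_mul_X_pow']
  rfl

/-- full monotonicity from adjacent monotonicity -/
lemma mono_of_adj {c : ℕ → ℕ} {B : ℕ} (h : ∀ n, n + 1 ≤ B → c n ≤ c (n + 1)) :
    ∀ n n', n ≤ n' → n' ≤ B → c n ≤ c n' := by
  intro n n' hle hB
  induction n' with
  | zero => simp [Nat.le_zero.mp hle]
  | succ m ih =>
      rcases Nat.lt_or_ge n (m + 1) with h1 | h1
      · exact le_trans (ih (Nat.lt_succ_iff.mp h1) (le_trans (Nat.le_succ m) hB))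
          (h m hB)
      · have : n = m + 1 := le_antisymm hle h1
        simp [this]

lemma adj (l k : ℕ) : ∀ n, n + 1 ≤ k * l / 2 → polyCoeff l k n ≤ polyCoeff l k (n + 1) := by
  induction k with
  | zero => intro n hn; omega
  | succ k ih =>
      intro n hn
      have mono := mono_of_adj ih
      rw [recurrence, recurrence]
      have key : ∀ j ∈ Finset.range (l + 1),
          (if j + 1 ≤ n + 1 then polyCoeff l k (n + 1 - (j + 1)) else 0)
            = (if j ≤ n then polyCoeff l k (n - j) else 0) := by
        intro j _
        simp [Nat.succ_le_succ_iff, Nat.succ_sub_succ]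
      -- rewrite LHS sum as shifted sum
      have lhs_eq : ∑ j ∈ Finset.range (l + 1), (if j ≤ n then polyCoeff l k (n - j) else 0)
          = ∑ j ∈ Finset.range (l + 1),
              (if j + 1 ≤ n + 1 then polyCoeff l k (n + 1 - (j + 1)) else 0) :=
        (Finset.sum_congr rfl key).symm
      rw [lhs_eq]
      -- RHS sum: split off j = 0; LHS shifted sum: split off j = l
      rw [Finset.sum_range_succ]  -- LHS : range l sum + term at l
      rw [Finset.sum_range_succ'] -- RHS : shift + term at 0
      have eqsum : ∀ j ∈ Finset.range l,
          (if j + 1 ≤ n + 1 then polyCoeff l k (n + 1 - (j + 1)) else 0)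
            = (if j + 1 ≤ n + 1 then polyCoeff l k (n + 1 - (j + 1)) else 0) := fun _ _ => rfl
      apply Nat.add_le_add le_rfl
      -- remains : (if l + 1 ≤ n + 1 then c k (n - l) else 0) ≤ c k (n + 1)
      rw [if_pos (Nat.zero_le (n+1)), Nat.sub_zero]
      by_cases hl : l + 1 ≤ n + 1
      · rw [if_pos hl, Nat.succ_sub_succ]
        have hln : l ≤ n := Nat.succ_le_succ_iff.mp hl
        have hexp : (k + 1) * l = k * l + l := by ring
        -- show c k (n - l) ≤ c k (n + 1)
        have hnl : 2 * (n + 1) ≤ (k + 1) * l := by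
          have := Nat.le_div_iff_mul_le (k := 2) (by norm_num) |>.mp hn
          omega
        rcases le_or_gt (n + 1) (k * l / 2) with hc | hc
        · exact mono (n - l) (n + 1) (by omega) hc
        · have hkl : n + 1 ≤ k * l := by omega
          rw [symm l k (n + 1) hkl]
          exact mono (n - l) (k * l - (n + 1)) (by omega) (by omega)
      · rw [if_neg hl]; exact Nat.zero_le _

end PolyCoeffAux

theorem polyCoeff_monotone_up_to_center (l k n n' : ℕ)
    (h1 : n ≤ n') (h2 : n' ≤ k * l / 2) :
    polyCoeff l k n ≤ polyCoeff l k n' :=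
  PolyCoeffAux.mono_of_adj (PolyCoeffAux.adj l k) n n' h1 h2
end

section
/- The central polynomial coefficient majorizes all coefficients in its row: for all nonnegative integers k, l and all n with 0 ≤ n ≤ kl, C(k,n)_{l+1} ≤ C(k, floor(kl/2))_{l+1}. -/
/-!
Extend the coefficients of `(1 + x + ⋯ + x^l)^k` by zero to `ℤ`. Multiplying by
`1 + x + ⋯ + x^l` replaces a coefficient sequence by its sums over windows of length `l + 1`.
If a sequence decreases with the distance from a centre `d / 2` (so in particular is symmetric
about it), its window sums are symmetric about `(d + l) / 2`, and moving a window in the left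
half one step to the right trades the value it drops for one nearer the centre; so the window
sums again decrease with the distance from their centre. By induction on `k` the coefficients
of `(1 + x + ⋯ + x^l)^k` decrease with the distance from `k l / 2`.
-/

open Finset Polynomial

/-- The centre is written as `d / 2` with `d : ℤ`, so that `|2 * m - d|` is twice the distance
from `m` to it. -/
def IsSymmUnimodal {α : Type*} [Preorder α] (d : ℤ) (f : ℤ → α) : Prop :=
  ∀ m m' : ℤ, |2 * m' - d| ≤ |2 * m - d| → f m ≤ f m'

def windowSum {α : Type*} [AddCommMonoid α] (l : ℕ) (f : ℤ → α) (z : ℤ) : α :=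
  ∑ i ∈ range (l + 1), f (z - i)

lemma two_mul_min_sub_self_sub (m d : ℤ) : 2 * min m (d - m) - d = -|2 * m - d| := by
  rcases abs_cases (2 * m - d) with ⟨h, _⟩ | ⟨h, _⟩ <;> rw [h] <;> omega

namespace IsSymmUnimodal

variable {α : Type*} {d : ℤ} {f : ℤ → α}

lemma apply_sub [PartialOrder α] (hf : IsSymmUnimodal d f) (z : ℤ) : f (d - z) = f z := by
  have h : |2 * (d - z) - d| = |2 * z - d| := by rw [← abs_neg]; ring_nf
  exact le_antisymm (hf _ _ h.ge) (hf _ _ h.le)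

lemma of_monotoneOn [Preorder α] (hsymm : ∀ z, f (d - z) = f z)
    (hmono : MonotoneOn f {z | 2 * z ≤ d}) : IsSymmUnimodal d f := by
  have hmin : ∀ m, f m = f (min m (d - m)) := fun m => by
    rcases min_choice m (d - m) with h | h <;> rw [h]
    exact (hsymm m).symm
  intro m m' h
  rw [hmin m, hmin m']
  have ha := two_mul_min_sub_self_sub m d
  have hb := two_mul_min_sub_self_sub m' d
  have := abs_nonneg (2 * m' - d)
  exact hmono (show _ ≤ d by omega) (show _ ≤ d by omega) (by omega)

end IsSymmUnimodal

section windowSum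

variable {α : Type*} [AddCommMonoid α] {d : ℤ} {f : ℤ → α} (l : ℕ)

lemma windowSum_reflect (hsymm : ∀ z, f (d - z) = f z) (z : ℤ) :
    windowSum l f (d + l - z) = windowSum l f z := by
  rw [windowSum, windowSum, ← sum_range_reflect]
  refine sum_congr rfl fun i hi => ?_
  rw [← hsymm]
  congr 1
  rw [mem_range] at hi
  push_cast [Nat.add_sub_cancel, Nat.le_of_lt_succ hi]
  ring

lemma windowSum_le_add_one [PartialOrder α] [IsOrderedAddMonoid α] (hf : IsSymmUnimodal d f)
    {m : ℤ} (hm : 2 * (m + 1) ≤ d + l) : windowSum l f m ≤ windowSum l f (m + 1) := by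
  rw [windowSum, windowSum, sum_range_succ, sum_range_succ']
  push_cast
  simp only [add_sub_add_right_eq_sub, sub_zero]
  -- the window drops `f (m - l)` and gains `f (m + 1)`, which is nearer the centre
  refine add_le_add le_rfl (hf _ _ ?_)
  rcases abs_cases (2 * (m + 1) - d) with ⟨h, _⟩ | ⟨h, _⟩ <;>
    rcases abs_cases (2 * (m - l) - d) with ⟨h', _⟩ | ⟨h', _⟩ <;> omega

lemma IsSymmUnimodal.windowSum [PartialOrder α] [IsOrderedAddMonoid α]
    (hf : IsSymmUnimodal d f) : IsSymmUnimodal (d + l) (windowSum l f) := by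
  refine .of_monotoneOn (fun z => windowSum_reflect l hf.apply_sub z) ?_
  refine monotoneOn_of_le_add_one ⟨fun _ _ y hy z hz => ?_⟩
    fun _ _ _ hm => windowSum_le_add_one l hf hm
  have : 2 * y ≤ d + l := hy
  show 2 * z ≤ d + l
  linarith [hz.2]

end windowSum

namespace Polynomial

variable {R : Type*} [Semiring R]

noncomputable def coeffInt (p : R[X]) (z : ℤ) : R :=
  if 0 ≤ z then p.coeff z.toNat else 0

@[simp]
lemma coeffInt_natCast (p : R[X]) (n : ℕ) : p.coeffInt n = p.coeff n := by
  simp [coeffInt]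

lemma coeffInt_one (z : ℤ) : (1 : R[X]).coeffInt z = if z = 0 then 1 else 0 := by
  unfold coeffInt
  split_ifs with h0 h0' h0'
  · simp [h0']
  · rw [coeff_one, if_neg (by omega)]
  · omega
  · rfl

lemma coeffInt_mul_sum_X_pow (p : R[X]) (l : ℕ) :
    (p * ∑ i ∈ range (l + 1), X ^ i).coeffInt = windowSum l p.coeffInt := by
  funext z
  rcases lt_or_ge z 0 with hz | hz
  · simp only [coeffInt, windowSum, if_neg hz.not_ge]
    exact (sum_eq_zero fun i _ => if_neg (by omega)).symm
  · lift z to ℕ using hz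
    simp only [coeffInt_natCast, windowSum, mul_sum, finsetSum_coeff, coeff_mul_X_pow']
    refine sum_congr rfl fun i _ => ?_
    by_cases hi : i ≤ z
    · rw [if_pos hi, ← Nat.cast_sub hi, coeffInt_natCast]
    · rw [if_neg hi, coeffInt, if_neg (by omega)]

lemma isSymmUnimodal_coeffInt_sum_X_pow_pow [PartialOrder R] [IsOrderedRing R] (l k : ℕ) :
    IsSymmUnimodal (k * l) ((∑ i ∈ range (l + 1), (X : R[X]) ^ i) ^ k).coeffInt := by
  induction k with
  | zero =>
    intro m m' h
    simp only [pow_zero, coeffInt_one]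
    split_ifs with hm hm'
    · exact le_rfl
    · subst hm
      exact absurd h (by simpa using hm')
    · exact zero_le_one
    · exact le_rfl
  | succ k ih =>
    rw [pow_succ, coeffInt_mul_sum_X_pow, Nat.cast_succ, add_one_mul]
    exact ih.windowSum l

end Polynomial

theorem polyCoeff_le_central_general (l k n : ℕ) :
    polyCoeff l k n ≤ polyCoeff l k (k * l / 2) := by
  simp only [polyCoeff, ← coeffInt_natCast]
  apply isSymmUnimodal_coeffInt_sum_X_pow_pow l k
  rw [← Nat.cast_mul]
  generalize k * l = N
  rcases abs_cases (2 * (n : ℤ) - N) with ⟨h, _⟩ | ⟨h, _⟩ <;>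
    rcases abs_cases (2 * ((N / 2 : ℕ) : ℤ) - N) with ⟨h', _⟩ | ⟨h', _⟩ <;> omega

theorem polyCoeff_le_central (l k n : ℕ) (hn : n ≤ k * l) :
    polyCoeff l k n ≤ polyCoeff l k (k * l / 2) :=
  polyCoeff_le_central_general l k n
end
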